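/- Let X be any n×p real matrix and let R satisfy 1 ≤ R ≤ min(n,p) and R < p. Suppose each loss function ρ_ij: ℝ → [0,∞) is symmetric and satisfies ρ_ij(z) → ∞ as |z| → ∞, and the penalty functions P₁, P₂ are bounded above on the unit spheres S^{n−1} and S^{p−1}, respectively. Then for the ELSVD right singular subspace function V_R^ρ (for any selection of minimizers), there exists l ≤ R+1 such that (1,l) ∈ BP(V_R^ρ;X). In particular, bp_row(V_R^ρ;X) = 1 and bp_col(V_R^ρ;X) ≤ R+1. -/

import Mathlib

noncomputable section
open scoped BigOperators
open Matrix

abbrev E (k : ℕ) := EuclideanSpace ℝ (Fin k)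

noncomputable def canonAngle {k : ℕ} (V W : Submodule ℝ (E k)) : ℝ :=
  Real.arccos (sInf {r : ℝ | ∃ w ∈ W, ‖w‖ = 1 ∧
    r = ‖(V.orthogonalProjection w : E k)‖})

variable {n p m : ℕ}

def BlockCorrupt (X Z : Matrix (Fin n) (Fin p) ℝ) (k l : ℕ) : Prop :=
  ∃ (I : Finset (Fin n)) (J : Finset (Fin p)), I.card = k ∧ J.card = l ∧
    ∀ i j, (i ∉ I ∨ j ∉ J) → Z i j = X i j

def RowCorrupt (X Z : Matrix (Fin n) (Fin p) ℝ) (k : ℕ) : Prop :=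
  ∃ I : Finset (Fin n), I.card = k ∧ ∀ i ∉ I, ∀ j, Z i j = X i j

def ColCorrupt (X Z : Matrix (Fin n) (Fin p) ℝ) (l : ℕ) : Prop :=
  ∃ J : Finset (Fin p), J.card = l ∧ ∀ j ∉ J, ∀ i, Z i j = X i j

def BreaksDownBlock (V : Matrix (Fin n) (Fin p) ℝ → Submodule ℝ (E m))
    (X : Matrix (Fin n) (Fin p) ℝ) (k l : ℕ) : Prop :=
  sSup {d : ℝ | ∃ Z, BlockCorrupt X Z k l ∧ d = canonAngle (V Z) (V X)} = Real.pi / 2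

def BreaksDownRow (V : Matrix (Fin n) (Fin p) ℝ → Submodule ℝ (E m))
    (X : Matrix (Fin n) (Fin p) ℝ) (k : ℕ) : Prop :=
  sSup {d : ℝ | ∃ Z, RowCorrupt X Z k ∧ d = canonAngle (V Z) (V X)} = Real.pi / 2

def BreaksDownCol (V : Matrix (Fin n) (Fin p) ℝ → Submodule ℝ (E m))
    (X : Matrix (Fin n) (Fin p) ℝ) (l : ℕ) : Prop :=
  sSup {d : ℝ | ∃ Z, ColCorrupt X Z l ∧ d = canonAngle (V Z) (V X)} = Real.pi / 2

noncomputable def bpRow (V : Matrix (Fin n) (Fin p) ℝ → Submodule ℝ (E m))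
    (X : Matrix (Fin n) (Fin p) ℝ) : ℕ :=
  sInf {k : ℕ | 1 ≤ k ∧ k ≤ n ∧ BreaksDownRow V X k}

noncomputable def bpCol (V : Matrix (Fin n) (Fin p) ℝ → Submodule ℝ (E m))
    (X : Matrix (Fin n) (Fin p) ℝ) : ℕ :=
  sInf {l : ℕ | 1 ≤ l ∧ l ≤ p ∧ BreaksDownCol V X l}

def IsBP (V : Matrix (Fin n) (Fin p) ℝ → Submodule ℝ (E m))
    (X : Matrix (Fin n) (Fin p) ℝ) (i j : ℕ) : Prop :=
  1 ≤ i ∧ i ≤ n ∧ 1 ≤ j ∧ j ≤ p ∧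
  (∀ k l, i ≤ k → k ≤ n → j ≤ l → l ≤ p → BreaksDownBlock V X k l) ∧
  (∀ k l, 1 ≤ k → 1 ≤ l → k ≤ i → l ≤ j → (k, l) ≠ (i, j) → ¬ BreaksDownBlock V X k l)

/-- The ELSVD objective `ρ(Y - d·u·vᵀ) + P₁(u) + P₂(v)`. -/
noncomputable def elsvdObj {n p : ℕ} (ρ : Fin n → Fin p → ℝ → ℝ)
    (P1 : E n → ℝ) (P2 : E p → ℝ) (Y : Matrix (Fin n) (Fin p) ℝ)
    (d : ℝ) (u : E n) (v : E p) : ℝ :=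
  (∑ i, ∑ j, ρ i j (Y i j - d * u i * v j)) + P1 u + P2 v

/-- `(d, u, v)` is a sequence of ELSVD triples for `Y`: for each `r`, the triple
`(d r, u r, v r)` minimizes the ELSVD objective over `d' ≥ 0` and unit vectors `u'`, `v'`
orthogonal to the previously obtained singular vectors. -/
def IsELSVD {n p : ℕ} (ρ : Fin n → Fin p → ℝ → ℝ) (P1 : E n → ℝ) (P2 : E p → ℝ)
    (R : ℕ) (Y : Matrix (Fin n) (Fin p) ℝ)
    (d : Fin R → ℝ) (u : Fin R → E n) (v : Fin R → E p) : Prop :=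
  ∀ r : Fin R,
    0 ≤ d r ∧ ‖u r‖ = 1 ∧ ‖v r‖ = 1 ∧
    (∀ s : Fin R, s < r → (inner ℝ (u s) (u r) : ℝ) = 0 ∧ (inner ℝ (v s) (v r) : ℝ) = 0) ∧
    ∀ (d' : ℝ) (u' : E n) (v' : E p), 0 ≤ d' → ‖u'‖ = 1 → ‖v'‖ = 1 →
      (∀ s : Fin R, s < r → (inner ℝ (u s) u' : ℝ) = 0 ∧ (inner ℝ (v s) v' : ℝ) = 0) →
      elsvdObj ρ P1 P2 Y (d r) (u r) (v r) ≤ elsvdObj ρ P1 P2 Y d' u' v'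

/-!
Corrupt one row of `X` on `R + 1` columns by adding `M • e_{i₀} cᵀ`, where `c` is a unit
vector supported on those columns and orthogonal to `V X` (possible since `R + 1 > R`).
Comparing the first ELSVD triple of the corrupted matrix with `(M, e_{i₀}, c)` bounds its loss
independently of `M`, so by coercivity of `ρ` its right vector `v₁` satisfies
`‖M • c - t • v₁‖ ≤ B` for some scalar `t`, i.e. `v₁` lines up with `c` as `M → ∞`. A unit
`w ∈ V X` orthogonal to the other `R - 1` right vectors of the corrupted matrix is then
orthogonal to `c`, and its projection onto the corrupted subspace has norm `|⟪v₁, w⟫| → 0`: the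
largest canonical angle tends to `π / 2`.
-/

open Filter
open scoped InnerProductSpace

lemma EuclideanSpace.norm_le_sum_abs {ι : Type*} [Fintype ι] (x : EuclideanSpace ℝ ι) :
    ‖x‖ ≤ ∑ i, |x i| := by
  rw [EuclideanSpace.norm_eq, Real.sqrt_le_iff]
  refine ⟨Finset.sum_nonneg fun i _ => abs_nonneg _, ?_⟩
  simpa only [Real.norm_eq_abs, sq_abs] using
    Finset.sum_sq_le_sq_sum_of_nonneg (fun i _ => abs_nonneg (x i))

lemma exists_abs_le_of_tendsto_cocompact {f : ℝ → ℝ} (hf : Tendsto f (cocompact ℝ) atTop)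
    (C : ℝ) : ∃ K, ∀ z, f z ≤ C → |z| ≤ K := by
  have hbdd : Bornology.IsBounded {z | f z ≤ C} := by
    rw [Bornology.isBounded_def, Metric.cobounded_eq_cocompact]
    filter_upwards [hf.eventually_gt_atTop C] with z hz
    exact not_le.2 hz
  obtain ⟨K, hK⟩ := isBounded_iff_forall_norm_le.1 hbdd
  exact ⟨K, fun z hz => hK z hz⟩

lemma exists_abs_le_of_sum_le {n p : ℕ} {ρ : Fin n → Fin p → ℝ → ℝ}
    (hρnonneg : ∀ i j z, 0 ≤ ρ i j z) (hρinf : ∀ i j, Tendsto (ρ i j) (cocompact ℝ) atTop)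
    (C : ℝ) :
    ∃ K, ∀ A : Matrix (Fin n) (Fin p) ℝ, ∑ i, ∑ j, ρ i j (A i j) ≤ C → ∀ i j, |A i j| ≤ K := by
  choose K hK using fun i j => exists_abs_le_of_tendsto_cocompact (hρinf i j) C
  obtain ⟨K₀, hK₀⟩ := Finite.bddAbove_range fun ij : Fin n × Fin p => K ij.1 ij.2
  refine ⟨K₀, fun A hA i j => (hK i j _ ?_).trans (hK₀ ⟨(i, j), rfl⟩)⟩
  calc ρ i j (A i j) ≤ ∑ j', ρ i j' (A i j') :=
        Finset.single_le_sum (fun j' _ => hρnonneg i j' _) (Finset.mem_univ j)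
    _ ≤ ∑ i', ∑ j', ρ i' j' (A i' j') :=
        Finset.single_le_sum (f := fun i' => ∑ j', ρ i' j' (A i' j'))
          (fun i' _ => Finset.sum_nonneg fun j' _ => hρnonneg i' j' _) (Finset.mem_univ i)
    _ ≤ C := hA

section InnerProductSpace

variable {F : Type*} [NormedAddCommGroup F] [InnerProductSpace ℝ F]

lemma Submodule.exists_norm_eq_one_inner_eq_zero_of_card_lt [FiniteDimensional ℝ F]
    (K : Submodule ℝ F) {ι : Type*} [Fintype ι] (f : ι → F)
    (h : Fintype.card ι < Module.finrank ℝ K) :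
    ∃ x ∈ K, ‖x‖ = 1 ∧ ∀ i, ⟪f i, x⟫_ℝ = 0 := by
  let T : K →ₗ[ℝ] ι → ℝ := LinearMap.pi fun i => (innerₛₗ ℝ (f i)).comp K.subtype
  have hT : LinearMap.ker T ≠ ⊥ :=
    LinearMap.ker_ne_bot_of_finrank_lt (by rwa [Module.finrank_fintype_fun_eq_card])
  obtain ⟨x, hxT, hx0⟩ := Submodule.exists_mem_ne_zero_of_ne_bot hT
  have hx : (x : F) ≠ 0 := by simpa using hx0
  refine ⟨‖(x : F)‖⁻¹ • (x : F), K.smul_mem _ x.2, norm_smul_inv_norm hx, fun i => ?_⟩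
  have hxi : ⟪f i, (x : F)⟫_ℝ = 0 := by simpa [T] using congrFun (LinearMap.mem_ker.1 hxT) i
  rw [real_inner_smul_right, hxi, mul_zero]

lemma starProjection_span_orthonormal_eq {ι : Type*} {v : ι → F} (hv : Orthonormal ℝ v)
    [(Submodule.span ℝ (Set.range v)).HasOrthogonalProjection] {i : ι} {w : F}
    (hw : ∀ j ≠ i, ⟪v j, w⟫_ℝ = 0) :
    (Submodule.span ℝ (Set.range v)).starProjection w = ⟪v i, w⟫_ℝ • v i := by
  refine Submodule.eq_starProjection_of_mem_of_inner_eq_zero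
    (Submodule.smul_mem _ _ (Submodule.subset_span ⟨i, rfl⟩)) fun x hx => ?_
  induction hx using Submodule.span_induction with
  | mem x hx =>
    obtain ⟨j, rfl⟩ := hx
    by_cases hji : j = i
    · subst hji
      rw [inner_sub_left, real_inner_smul_left, real_inner_self_eq_norm_sq, hv.1 j,
        real_inner_comm]
      ring
    · rw [inner_sub_left, real_inner_smul_left, hv.2 (Ne.symm hji), real_inner_comm,
        hw j hji]
      ring
  | zero => exact inner_zero_right _
  | add x y _ _ hx hy => rw [inner_add_right, hx, hy, add_zero]
  | smul a x _ hx => rw [real_inner_smul_right, hx, mul_zero]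

lemma abs_inner_le_of_norm_smul_sub_smul_le {c v w : F} {M t B δ : ℝ} (hc : ‖c‖ = 1)
    (hv : ‖v‖ = 1) (hw : ‖w‖ = 1) (hcw : ⟪c, w⟫_ℝ = 0) (hB : ‖M • c - t • v‖ ≤ B)
    (hδ : 0 < δ) (hM : B + B / δ < M) : |⟪v, w⟫_ℝ| ≤ δ := by
  have hB0 : 0 ≤ B := (norm_nonneg _).trans hB
  have hBδ : 0 ≤ B / δ := div_nonneg hB0 hδ.le
  have ht : M - B ≤ |t| := by
    have := norm_sub_norm_le (M • c) (t • v)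
    rw [norm_smul, norm_smul, hc, hv, Real.norm_eq_abs, Real.norm_eq_abs,
      abs_of_pos (by linarith)] at this
    linarith
  have hinner : |t| * |⟪v, w⟫_ℝ| ≤ B :=
    calc |t| * |⟪v, w⟫_ℝ| = |⟪t • v - M • c, w⟫_ℝ| := by
          rw [inner_sub_left, real_inner_smul_left, real_inner_smul_left, hcw, mul_zero,
            sub_zero, abs_mul]
      _ ≤ ‖t • v - M • c‖ * ‖w‖ := abs_real_inner_le_norm _ _
      _ ≤ B := by rwa [hw, mul_one, norm_sub_rev]
  have htδ : B < δ * |t| := by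
    have := (div_lt_iff₀ hδ).1 (show B / δ < |t| by linarith)
    linarith
  by_contra! h
  nlinarith [abs_nonneg t]

end InnerProductSpace

lemma exists_norm_eq_one_supported_inner_eq_zero {R p : ℕ} (f : Fin R → E p) (hRp : R < p) :
    ∃ J : Finset (Fin p), J.card = R + 1 ∧
      ∃ c : E p, ‖c‖ = 1 ∧ (∀ j ∉ J, c j = 0) ∧ ∀ r, ⟪f r, c⟫_ℝ = 0 := by
  obtain ⟨J, -, hJ⟩ :=
    Finset.exists_subset_card_eq (s := (Finset.univ : Finset (Fin p))) (n := R + 1)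
      (by simpa using hRp)
  let g : Fin R ⊕ (Jᶜ : Finset (Fin p)) → E p :=
    Sum.elim f fun j => EuclideanSpace.single (j : Fin p) 1
  have hcard : Fintype.card (Fin R ⊕ (Jᶜ : Finset (Fin p))) <
      Module.finrank ℝ (⊤ : Submodule ℝ (E p)) := by
    simp only [Fintype.card_sum, Fintype.card_fin, Fintype.card_coe, Finset.card_compl, hJ,
      finrank_top, finrank_euclideanSpace_fin]
    omega
  obtain ⟨c, -, hc, hcg⟩ :=
    (⊤ : Submodule ℝ (E p)).exists_norm_eq_one_inner_eq_zero_of_card_lt g hcard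
  refine ⟨J, hJ, c, hc, fun j hj => ?_, fun r => hcg (Sum.inl r)⟩
  simpa [g, EuclideanSpace.inner_single_left] using hcg (Sum.inr ⟨j, Finset.mem_compl.2 hj⟩)

section CanonAngle

open Submodule

variable {k : ℕ}

lemma canonAngle_le_pi_div_two (U W : Submodule ℝ (E k)) : canonAngle U W ≤ Real.pi / 2 :=
  Real.arccos_le_pi_div_two.2 <| Real.sInf_nonneg <| by
    rintro _ ⟨w, -, -, rfl⟩
    exact norm_nonneg _

lemma arccos_le_canonAngle {U W : Submodule ℝ (E k)} {w : E k} {δ : ℝ} (hwW : w ∈ W)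
    (hw : ‖w‖ = 1) (hδ : ‖U.starProjection w‖ ≤ δ) : Real.arccos δ ≤ canonAngle U W := by
  refine Real.antitone_arccos ((csInf_le ⟨0, ?_⟩ ?_).trans hδ)
  · rintro _ ⟨w, -, -, rfl⟩
    exact norm_nonneg _
  · exact ⟨w, hwW, hw, rfl⟩

lemma arccos_le_canonAngle_of_norm_smul_sub_smul_le {ι : Type*} [Fintype ι] [DecidableEq ι]
    {v w : ι → E k} (hv : Orthonormal ℝ v) (hw : Orthonormal ℝ w) {c : E k} (hc : ‖c‖ = 1)
    (hcw : ∀ i, ⟪w i, c⟫_ℝ = 0) {i₀ : ι} {M t B δ : ℝ} (hB : ‖M • c - t • v i₀‖ ≤ B)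
    (hδ : 0 < δ) (hM : B + B / δ < M) :
    Real.arccos δ ≤ canonAngle (span ℝ (Set.range v)) (span ℝ (Set.range w)) := by
  have hcard : Fintype.card {i // i ≠ i₀} < Module.finrank ℝ (span ℝ (Set.range w)) := by
    rw [finrank_span_eq_card hw.linearIndependent, Fintype.card_subtype_compl,
      Fintype.card_subtype_eq]
    have : 0 < Fintype.card ι := Fintype.card_pos_iff.2 ⟨i₀⟩
    omega
  obtain ⟨x, hxw, hx, hxv⟩ :=
    (span ℝ (Set.range w)).exists_norm_eq_one_inner_eq_zero_of_card_lt
      (fun i : {i // i ≠ i₀} => v i) hcard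
  have hw_le : span ℝ (Set.range w) ≤ (ℝ ∙ c)ᗮ :=
    span_le.2 <| Set.range_subset_iff.2 fun i =>
      mem_orthogonal_singleton_iff_inner_right.2 (by rw [real_inner_comm]; exact hcw i)
  refine arccos_le_canonAngle hxw hx ?_
  rw [starProjection_span_orthonormal_eq hv (i := i₀) fun i hi => hxv ⟨i, hi⟩, norm_smul,
    hv.1 i₀, mul_one, Real.norm_eq_abs]
  exact abs_inner_le_of_norm_smul_sub_smul_le hc (hv.1 i₀) hx
    (mem_orthogonal_singleton_iff_inner_right.1 (hw_le hxw)) hB hδ hM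

end CanonAngle

section Breakdown

variable {n p m : ℕ} {X Z : Matrix (Fin n) (Fin p) ℝ} {k l k' l' : ℕ}

lemma blockCorrupt_of_rankOne (X : Matrix (Fin n) (Fin p) ℝ) (M : ℝ) {u : E n} {v : E p}
    {I : Finset (Fin n)} {J : Finset (Fin p)} (hI : I.card = k) (hJ : J.card = l)
    (hu : ∀ i ∉ I, u i = 0) (hv : ∀ j ∉ J, v j = 0) :
    BlockCorrupt X (Matrix.of fun i j => X i j + M * u i * v j) k l := by
  refine ⟨I, J, hI, hJ, fun i j hij => ?_⟩
  rcases hij with hi | hj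
  · simp [hu i hi]
  · simp [hv j hj]

lemma BlockCorrupt.mono (h : BlockCorrupt X Z k l) (hk : k ≤ k') (hk' : k' ≤ n) (hl : l ≤ l')
    (hl' : l' ≤ p) : BlockCorrupt X Z k' l' := by
  obtain ⟨I, J, hI, hJ, hZ⟩ := h
  obtain ⟨I', hII', -, hI'⟩ := Finset.exists_subsuperset_card_eq I.subset_univ
    (hI.trans_le hk) (by simpa using hk')
  obtain ⟨J', hJJ', -, hJ'⟩ := Finset.exists_subsuperset_card_eq J.subset_univ
    (hJ.trans_le hl) (by simpa using hl')
  exact ⟨I', J', hI', hJ', fun i j hij => hZ i j (hij.imp (mt (@hII' i)) (mt (@hJJ' j)))⟩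

lemma BlockCorrupt.rowCorrupt (h : BlockCorrupt X Z k l) : RowCorrupt X Z k := by
  obtain ⟨I, _, hI, -, hZ⟩ := h
  exact ⟨I, hI, fun i hi j => hZ i j (Or.inl hi)⟩

lemma BlockCorrupt.colCorrupt (h : BlockCorrupt X Z k l) : ColCorrupt X Z l := by
  obtain ⟨_, J, -, hJ, hZ⟩ := h
  exact ⟨J, hJ, fun j hj i => hZ i j (Or.inr hj)⟩

variable {V : Matrix (Fin n) (Fin p) ℝ → Submodule ℝ (E m)}
  {C C' : Matrix (Fin n) (Fin p) ℝ → Prop}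

lemma sSup_canonAngle_eq_pi_div_two_of_forall
    (h : ∀ δ > 0, ∃ Z, C Z ∧ Real.arccos δ ≤ canonAngle (V Z) (V X)) :
    sSup {d | ∃ Z, C Z ∧ d = canonAngle (V Z) (V X)} = Real.pi / 2 := by
  set A := {d | ∃ Z, C Z ∧ d = canonAngle (V Z) (V X)}
  have hub : ∀ a ∈ A, a ≤ Real.pi / 2 := by
    rintro _ ⟨Z, -, rfl⟩
    exact canonAngle_le_pi_div_two _ _
  have hA : ∀ δ > 0, Real.arccos δ ≤ sSup A := fun δ hδ => by
    obtain ⟨Z, hZ, hδZ⟩ := h δ hδ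
    exact hδZ.trans (le_csSup ⟨_, hub⟩ ⟨Z, hZ, rfl⟩)
  obtain ⟨Z, hZ, -⟩ := h 1 one_pos
  refine le_antisymm (csSup_le ⟨_, Z, hZ, rfl⟩ hub) ?_
  have hlim : Tendsto (fun j : ℕ => Real.arccos (1 / (j + 1))) atTop (nhds (Real.pi / 2)) := by
    simpa [Real.arccos_zero, Function.comp_def] using
      (Real.continuous_arccos.tendsto 0).comp tendsto_one_div_add_atTop_nhds_zero_nat
  exact le_of_tendsto' hlim fun j => hA _ Nat.one_div_pos_of_nat

lemma sSup_canonAngle_eq_pi_div_two_of_imp (hCC' : ∀ Z, C Z → C' Z)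
    (h : sSup {d | ∃ Z, C Z ∧ d = canonAngle (V Z) (V X)} = Real.pi / 2) :
    sSup {d | ∃ Z, C' Z ∧ d = canonAngle (V Z) (V X)} = Real.pi / 2 := by
  set A := {d | ∃ Z, C Z ∧ d = canonAngle (V Z) (V X)}
  set A' := {d | ∃ Z, C' Z ∧ d = canonAngle (V Z) (V X)}
  have hub : ∀ a ∈ A', a ≤ Real.pi / 2 := by
    rintro _ ⟨Z, -, rfl⟩
    exact canonAngle_le_pi_div_two _ _
  have hsub : A ⊆ A' := by
    rintro _ ⟨Z, hZ, rfl⟩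
    exact ⟨Z, hCC' Z hZ, rfl⟩
  have hne : A.Nonempty := by
    by_contra hempty
    rw [Set.not_nonempty_iff_eq_empty.1 hempty, Real.sSup_empty] at h
    linarith [Real.pi_pos]
  exact le_antisymm (csSup_le (hne.mono hsub) hub) (h ▸ csSup_le_csSup ⟨_, hub⟩ hne hsub)

lemma BreaksDownBlock.mono (h : BreaksDownBlock V X k l) (hk : k ≤ k') (hk' : k' ≤ n)
    (hl : l ≤ l') (hl' : l' ≤ p) : BreaksDownBlock V X k' l' :=
  sSup_canonAngle_eq_pi_div_two_of_imp (fun _ hZ => hZ.mono hk hk' hl hl') h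

lemma BreaksDownBlock.breaksDownRow (h : BreaksDownBlock V X k l) : BreaksDownRow V X k :=
  sSup_canonAngle_eq_pi_div_two_of_imp (fun _ hZ => hZ.rowCorrupt) h

lemma BreaksDownBlock.breaksDownCol (h : BreaksDownBlock V X k l) : BreaksDownCol V X l :=
  sSup_canonAngle_eq_pi_div_two_of_imp (fun _ hZ => hZ.colCorrupt) h

lemma exists_isBP_one_le (hn : 1 ≤ n) (hl : 1 ≤ l) (hlp : l ≤ p)
    (h : BreaksDownBlock V X 1 l) : ∃ l' ≤ l, IsBP V X 1 l' := by
  classical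
  have hex : ∃ l', 1 ≤ l' ∧ BreaksDownBlock V X 1 l' := ⟨l, hl, h⟩
  obtain ⟨hfind1, hfind⟩ := Nat.find_spec hex
  have hle : Nat.find hex ≤ l := Nat.find_min' hex ⟨hl, h⟩
  refine ⟨Nat.find hex, hle, le_rfl, hn, hfind1, hle.trans hlp,
    fun k' l' hk hk' hl hl' => hfind.mono hk hk' hl hl', fun k' l' hk1 hl1 hk hl hne hbreak => ?_⟩
  obtain rfl : k' = 1 := le_antisymm hk hk1
  exact Nat.find_min hex (lt_of_le_of_ne hl fun heq => hne (by rw [heq])) ⟨hl1, hbreak⟩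

lemma bpRow_eq_one (hn : 1 ≤ n) (h : BreaksDownRow V X 1) : bpRow V X = 1 :=
  le_antisymm (Nat.sInf_le ⟨le_rfl, hn, h⟩) (le_csInf ⟨1, le_rfl, hn, h⟩ fun _ hk => hk.1)

lemma bpCol_le (hl : 1 ≤ l) (hlp : l ≤ p) (h : BreaksDownCol V X l) : bpCol V X ≤ l :=
  Nat.sInf_le ⟨hl, hlp, h⟩

end Breakdown

section ELSVD

variable {n p R : ℕ} {ρ : Fin n → Fin p → ℝ → ℝ} {P1 : E n → ℝ} {P2 : E p → ℝ}
  {Y : Matrix (Fin n) (Fin p) ℝ} {d : Fin R → ℝ} {u : Fin R → E n} {v : Fin R → E p}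

lemma IsELSVD.orthonormal_right (h : IsELSVD ρ P1 P2 R Y d u v) : Orthonormal ℝ v := by
  refine ⟨fun r => (h r).2.2.1, fun r s hrs => ?_⟩
  rcases lt_or_gt_of_ne hrs with hlt | hlt
  · exact ((h s).2.2.2.1 r hlt).2
  · rw [real_inner_comm]
    exact ((h r).2.2.2.1 s hlt).2

lemma IsELSVD.elsvdObj_le (h : IsELSVD ρ P1 P2 R Y d u v) {r : Fin R} (hr : (r : ℕ) = 0)
    {d' : ℝ} {u' : E n} {v' : E p} (hd' : 0 ≤ d') (hu' : ‖u'‖ = 1) (hv' : ‖v'‖ = 1) :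
    elsvdObj ρ P1 P2 Y (d r) (u r) (v r) ≤ elsvdObj ρ P1 P2 Y d' u' v' :=
  (h r).2.2.2.2 d' u' v' hd' hu' hv' fun s hs => absurd hs (by simp [Fin.lt_def, hr])

-- The first triple beats `(0, u', v')`, whose loss term does not depend on `u'` and `v'`.
lemma IsELSVD.exists_le_add_penalty (h : IsELSVD ρ P1 P2 R Y d u v) (hR : 0 < R) :
    ∃ b, ∀ u' : E n, ∀ v' : E p, ‖u'‖ = 1 → ‖v'‖ = 1 → b ≤ P1 u' + P2 v' := by
  refine ⟨elsvdObj ρ P1 P2 Y (d ⟨0, hR⟩) (u ⟨0, hR⟩) (v ⟨0, hR⟩) - ∑ i, ∑ j, ρ i j (Y i j),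
    fun u' v' hu' hv' => ?_⟩
  have := h.elsvdObj_le (r := ⟨0, hR⟩) rfl le_rfl hu' hv'
  simp only [elsvdObj, zero_mul, sub_zero] at this ⊢
  linarith

theorem exists_norm_smul_sub_smul_le_of_isELSVD_rankOne (hρnonneg : ∀ i j z, 0 ≤ ρ i j z)
    (hρinf : ∀ i j, Tendsto (ρ i j) (cocompact ℝ) atTop)
    (hP1 : ∃ B1 : ℝ, ∀ u : E n, ‖u‖ = 1 → P1 u ≤ B1)
    (hP2 : ∃ B2 : ℝ, ∀ v : E p, ‖v‖ = 1 → P2 v ≤ B2) {b : ℝ}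
    (hb : ∀ u : E n, ∀ v : E p, ‖u‖ = 1 → ‖v‖ = 1 → b ≤ P1 u + P2 v)
    (X : Matrix (Fin n) (Fin p) ℝ) (i₀ : Fin n) {c : E p} (hc : ‖c‖ = 1) :
    ∃ B, ∀ M, 0 ≤ M → ∀ d u v, IsELSVD ρ P1 P2 R
      (Matrix.of fun i j => X i j + M * EuclideanSpace.single i₀ (1 : ℝ) i * c j) d u v →
      ∀ r : Fin R, (r : ℕ) = 0 → ‖M • c - (d r * u r i₀) • v r‖ ≤ B := by
  obtain ⟨B1, hB1⟩ := hP1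
  obtain ⟨B2, hB2⟩ := hP2
  obtain ⟨K, hK⟩ := exists_abs_le_of_sum_le hρnonneg hρinf (∑ i, ∑ j, ρ i j (X i j) + B1 + B2 - b)
  set x : E p := WithLp.toLp 2 (X i₀)
  refine ⟨p * K + ‖x‖, fun M hM d u v hZ r hr => ?_⟩
  set Z : Matrix (Fin n) (Fin p) ℝ :=
    Matrix.of fun i j => X i j + M * EuclideanSpace.single i₀ (1 : ℝ) i * c j
  set t := d r * u r i₀
  have hsingle : ‖EuclideanSpace.single i₀ (1 : ℝ)‖ = 1 := by simp
  have hres : ∑ i, ∑ j, ρ i j (Z i j - d r * u r i * v r j) ≤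
      ∑ i, ∑ j, ρ i j (X i j) + B1 + B2 - b := by
    have hmin := hZ.elsvdObj_le hr hM hsingle hc
    have hZX : ∀ i j, Z i j - M * EuclideanSpace.single i₀ (1 : ℝ) i * c j = X i j := by
      intro i j
      simp only [Z, Matrix.of_apply, add_sub_cancel_right]
    simp only [elsvdObj, hZX] at hmin
    linarith [hB1 _ hsingle, hB2 _ hc, hb (u r) (v r) (hZ r).2.1 (hZ r).2.2.1]
  have hrow : ‖x + (M • c - t • v r)‖ ≤ p * K := by
    refine (EuclideanSpace.norm_le_sum_abs _).trans ?_
    calc ∑ j, |(x + (M • c - t • v r)) j| ≤ ∑ _j : Fin p, K := Finset.sum_le_sum fun j _ => by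
          refine le_of_eq_of_le (congrArg abs ?_) (hK _ hres i₀ j)
          simp [Z, x, t]
          ring
      _ = p * K := by simp
  calc ‖M • c - t • v r‖ = ‖(x + (M • c - t • v r)) - x‖ := by rw [add_sub_cancel_left]
    _ ≤ ‖x + (M • c - t • v r)‖ + ‖x‖ := norm_sub_le _ _
    _ ≤ p * K + ‖x‖ := by linarith

end ELSVD

theorem breaksDownBlock_one_add_one {n p R : ℕ} (hR : 0 < R) (hn : 0 < n) (hRp : R < p)
    {ρ : Fin n → Fin p → ℝ → ℝ} (hρnonneg : ∀ i j z, 0 ≤ ρ i j z)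
    (hρinf : ∀ i j, Tendsto (ρ i j) (cocompact ℝ) atTop) {P1 : E n → ℝ} {P2 : E p → ℝ}
    (hP1 : ∃ B1 : ℝ, ∀ u : E n, ‖u‖ = 1 → P1 u ≤ B1)
    (hP2 : ∃ B2 : ℝ, ∀ v : E p, ‖v‖ = 1 → P2 v ≤ B2)
    {V : Matrix (Fin n) (Fin p) ℝ → Submodule ℝ (E p)}
    (hV : ∀ Y, ∃ (d : Fin R → ℝ) (u : Fin R → E n) (v : Fin R → E p),
      IsELSVD ρ P1 P2 R Y d u v ∧ V Y = Submodule.span ℝ (Set.range v))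
    (X : Matrix (Fin n) (Fin p) ℝ) :
    BreaksDownBlock V X 1 (R + 1) := by
  obtain ⟨_, _, vX, hX, hVX⟩ := hV X
  obtain ⟨b, hb⟩ := hX.exists_le_add_penalty hR
  obtain ⟨J, hJ, c, hc, hcJ, hcX⟩ := exists_norm_eq_one_supported_inner_eq_zero vX hRp
  let i₀ : Fin n := ⟨0, hn⟩
  obtain ⟨B, hB⟩ := exists_norm_smul_sub_smul_le_of_isELSVD_rankOne (R := R) hρnonneg hρinf
    hP1 hP2 hb X i₀ hc
  refine sSup_canonAngle_eq_pi_div_two_of_forall fun δ hδ => ?_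
  set M := max (B + B / δ) 0 + 1
  obtain ⟨d, u, v, hZ, hVZ⟩ :=
    hV (Matrix.of fun i j => X i j + M * EuclideanSpace.single i₀ (1 : ℝ) i * c j)
  refine ⟨_, blockCorrupt_of_rankOne X M (u := EuclideanSpace.single i₀ (1 : ℝ))
    (Finset.card_singleton i₀) hJ (fun i hi => by simpa using hi) hcJ, ?_⟩
  rw [hVZ, hVX]
  exact arccos_le_canonAngle_of_norm_smul_sub_smul_le hZ.orthonormal_right hX.orthonormal_right hc
    hcX (hB M (by positivity) d u v hZ ⟨0, hR⟩ rfl) hδ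
    ((le_max_left _ _).trans_lt (lt_add_one _))

theorem stmt7_general {n p : ℕ} (R : ℕ) (hR1 : 1 ≤ R) (hRmin : R ≤ min n p) (hRp : R < p)
    (ρ : Fin n → Fin p → ℝ → ℝ)
    (hρnonneg : ∀ i j z, 0 ≤ ρ i j z)
    (hρinf : ∀ i j, Filter.Tendsto (ρ i j) (Filter.cocompact ℝ) Filter.atTop)
    (P1 : E n → ℝ) (P2 : E p → ℝ)
    (hP1 : ∃ B1 : ℝ, ∀ u : E n, ‖u‖ = 1 → P1 u ≤ B1)
    (hP2 : ∃ B2 : ℝ, ∀ v : E p, ‖v‖ = 1 → P2 v ≤ B2)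
    (V : Matrix (Fin n) (Fin p) ℝ → Submodule ℝ (E p))
    (hV : ∀ Y, ∃ (d : Fin R → ℝ) (u : Fin R → E n) (v : Fin R → E p),
      IsELSVD ρ P1 P2 R Y d u v ∧ V Y = Submodule.span ℝ (Set.range v))
    (X : Matrix (Fin n) (Fin p) ℝ) :
    (∃ l ≤ R + 1, IsBP V X 1 l) ∧
    bpRow V X = 1 ∧ bpCol V X ≤ R + 1 := by
  have hn : 1 ≤ n := hR1.trans (hRmin.trans (min_le_left n p))
  have hbreak : BreaksDownBlock V X 1 (R + 1) :=
    breaksDownBlock_one_add_one hR1 hn hRp hρnonneg hρinf hP1 hP2 hV X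
  exact ⟨exists_isBP_one_le hn (Nat.le_add_left 1 R) hRp hbreak,
    bpRow_eq_one hn hbreak.breaksDownRow, bpCol_le (Nat.le_add_left 1 R) hRp hbreak.breaksDownCol⟩

/-- for the ELSVD right singular subspace function `V_R^ρ` (any selection of
minimizers), with each `ρ_ij` nonnegative, symmetric and diverging as `|z| → ∞`, and
penalties bounded above on the unit spheres, there is `l ≤ R+1` with `(1,l) ∈ BP(V_R^ρ;X)`;
in particular `bp_row(V_R^ρ;X) = 1` and `bp_col(V_R^ρ;X) ≤ R+1`. -/
theorem stmt7 {n p : ℕ} (R : ℕ) (hR1 : 1 ≤ R) (hRmin : R ≤ min n p) (hRp : R < p)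
    (ρ : Fin n → Fin p → ℝ → ℝ)
    (hρnonneg : ∀ i j z, 0 ≤ ρ i j z)
    (hρsymm : ∀ i j z, ρ i j (-z) = ρ i j z)
    (hρinf : ∀ i j, Filter.Tendsto (ρ i j) (Filter.cocompact ℝ) Filter.atTop)
    (P1 : E n → ℝ) (P2 : E p → ℝ)
    (hP1 : ∃ B1 : ℝ, ∀ u : E n, ‖u‖ = 1 → P1 u ≤ B1)
    (hP2 : ∃ B2 : ℝ, ∀ v : E p, ‖v‖ = 1 → P2 v ≤ B2)
    (V : Matrix (Fin n) (Fin p) ℝ → Submodule ℝ (E p))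
    (hV : ∀ Y, ∃ (d : Fin R → ℝ) (u : Fin R → E n) (v : Fin R → E p),
      IsELSVD ρ P1 P2 R Y d u v ∧ V Y = Submodule.span ℝ (Set.range v))
    (X : Matrix (Fin n) (Fin p) ℝ) :
    (∃ l ≤ R + 1, IsBP V X 1 l) ∧
    bpRow V X = 1 ∧ bpCol V X ≤ R + 1 :=
  stmt7_general R hR1 hRmin hRp ρ hρnonneg hρinf P1 P2 hP1 hP2 V hV X
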